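/- Let X̃ ⊂ 𝔸⁷ be the hypersurface F = x² + u y² + 2 v y z + w z² + (u w - v²) t² = 0 over an algebraically closed field k of characteristic 0. Any point of X̃ where all seven partial derivatives of F vanish lies in S₁ ∪ S₂, where S₁ = {x = uw - v² = uy + vz = y² + wt² = z² + ut² = 0} and S₂ = {x = y = z = t = 0}. -/

import Mathlib

/-!
Write a point as (x,y,z,t,u,v,w) = (p 0, …, p 6). Since ∂F/∂t = 2(uw - v²)t, either
uw - v² = 0, and then ∂F/∂x = 2x, ∂F/∂y = 2(uy + vz), ∂F/∂u = y² + wt², ∂F/∂w = z² + ut²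
give the equations of S₁; or t = 0, and then ∂F/∂u = y² and ∂F/∂w = z² force the point into S₂.
-/

open MvPolynomial

noncomputable section

variable {k : Type*} [Field k] [IsAlgClosed k] [CharZero k]

abbrev S (k : Type*) [Field k] := MvPolynomial (Fin 7) k

def F : S k := (X 0)^2 + (X 4)*(X 1)^2 + 2*(X 5)*(X 1)*(X 2) + (X 6)*(X 2)^2
  + ((X 4)*(X 6) - (X 5)^2)*(X 3)^2

@[simp]
theorem Derivation.map_ofNat {R A M : Type*} [CommSemiring R] [CommSemiring A] [AddCommMonoid M]
    [Algebra R A] [Module A M] [Module R M] (D : Derivation R A M) (n : ℕ) [n.AtLeastTwo] :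
    D (ofNat(n) : A) = 0 :=
  D.map_natCast n

section PartialDerivatives

variable {K : Type*} [Field K] (p : Fin 7 → K)

theorem eval_pderiv_F_x : eval p (pderiv 0 (F : S K)) = 2 * p 0 := by
  simp [F]

theorem eval_pderiv_F_y : eval p (pderiv 1 (F : S K)) = 2 * (p 4 * p 1 + p 5 * p 2) := by
  simp [F]; ring

theorem eval_pderiv_F_t : eval p (pderiv 3 (F : S K)) = 2 * (p 4 * p 6 - p 5 ^ 2) * p 3 := by
  simp [F]; ring

theorem eval_pderiv_F_u : eval p (pderiv 4 (F : S K)) = p 1 ^ 2 + p 6 * p 3 ^ 2 := by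
  simp [F]; ring

theorem eval_pderiv_F_w : eval p (pderiv 6 (F : S K)) = p 2 ^ 2 + p 4 * p 3 ^ 2 := by
  simp [F]; ring

end PartialDerivatives

theorem singular_locus_in_S1_union_S2_general (p : Fin 7 → k)
    (hd : ∀ i : Fin 7, eval p (pderiv i (F : S k)) = 0) :
    (p 0 = 0 ∧ p 4 * p 6 - (p 5)^2 = 0 ∧ p 4 * p 1 + p 5 * p 2 = 0 ∧
      (p 1)^2 + p 6 * (p 3)^2 = 0 ∧ (p 2)^2 + p 4 * (p 3)^2 = 0) ∨
    (p 0 = 0 ∧ p 1 = 0 ∧ p 2 = 0 ∧ p 3 = 0) := by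
  have hx : p 0 = 0 := by simpa [eval_pderiv_F_x] using hd 0
  have hy : p 4 * p 1 + p 5 * p 2 = 0 := by simpa [eval_pderiv_F_y] using hd 1
  have ht : (p 4 * p 6 - p 5 ^ 2) * p 3 = 0 := by simpa [eval_pderiv_F_t, mul_assoc] using hd 3
  have hu : p 1 ^ 2 + p 6 * p 3 ^ 2 = 0 := eval_pderiv_F_u p ▸ hd 4
  have hw : p 2 ^ 2 + p 4 * p 3 ^ 2 = 0 := eval_pderiv_F_w p ▸ hd 6
  rcases mul_eq_zero.1 ht with hdisc | ht
  · exact .inl ⟨hx, hdisc, hy, hu, hw⟩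
  · have hy0 : p 1 = 0 := pow_eq_zero_iff two_ne_zero |>.1 (by simpa [ht] using hu)
    have hz0 : p 2 = 0 := pow_eq_zero_iff two_ne_zero |>.1 (by simpa [ht] using hw)
    exact .inr ⟨hx, hy0, hz0, ht⟩

/-- Any singular point of the hypersurface F = 0 lies in S₁ ∪ S₂, where the coordinates
of a point p are (x,y,z,t,u,v,w) = (p 0, p 1, p 2, p 3, p 4, p 5, p 6). -/
theorem singular_locus_in_S1_union_S2 (p : Fin 7 → k)
    (hF : eval p (F : S k) = 0)
    (hd : ∀ i : Fin 7, eval p (pderiv i (F : S k)) = 0) :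
    (p 0 = 0 ∧ p 4 * p 6 - (p 5)^2 = 0 ∧ p 4 * p 1 + p 5 * p 2 = 0 ∧
      (p 1)^2 + p 6 * (p 3)^2 = 0 ∧ (p 2)^2 + p 4 * (p 3)^2 = 0) ∨
    (p 0 = 0 ∧ p 1 = 0 ∧ p 2 = 0 ∧ p 3 = 0) :=
  singular_locus_in_S1_union_S2_general p hd

end
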